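/- arXiv:2105.05378 — 3 statements merged into one kernel-verified Lean document; each statement's English description precedes it below -/
import Mathlib

section
/- Let τ > 0, 0 < p_a' ≤ p_a, and f_τ(t) = p_a + (t/(τ - 1 + e^{-τ}))(p_a' - p_a), with q(t) the solution of dq/dt = f_τ(t) - q(t), q(0) = p_a. Then dq/dt(t) = ((1 - e^{-t})/(τ - 1 + e^{-τ}))(p_a' - p_a) ≤ 0 for all t ∈ [0, τ]. -/
/-!
Against the ramp input `pa + c t` the relaxation equation `q' = f - q` is solved explicitly by
`q t = pa + c (t - 1 + e^{-t})`, and solutions are unique because the right-hand side is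
`1`-Lipschitz in `q`. Hence `q' = f - q = c (1 - e^{-t})`; with `c = (pa' - pa)/(τ - 1 + e^{-τ})`
this is `≤ 0`, since `e^{-t} ≤ 1` for `t ≥ 0` and `τ - 1 + e^{-τ} ≥ 0` by `1 + x ≤ e^x`.
-/

open Real Set

theorem eqOn_Icc_of_hasDerivAt_sub_self {E : Type*} [NormedAddCommGroup E] [NormedSpace ℝ E]
    {f q r : ℝ → E} {a b : ℝ}
    (hq : ∀ t ∈ Icc a b, HasDerivAt q (f t - q t) t)
    (hr : ∀ t ∈ Icc a b, HasDerivAt r (f t - r t) t) (ha : q a = r a) :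
    EqOn q r (Icc a b) :=
  ODE_solution_unique (v := fun t x ↦ f t - x) (K := 1)
    (fun t ↦ by simpa using (LipschitzWith.const (f t)).sub LipschitzWith.id)
    (HasDerivAt.continuousOn hq) (fun t ht ↦ (hq t (Ico_subset_Icc_self ht)).hasDerivWithinAt)
    (HasDerivAt.continuousOn hr) (fun t ht ↦ (hr t (Ico_subset_Icc_self ht)).hasDerivWithinAt) ha

theorem hasDerivAt_rampResponse (p c t : ℝ) :
    HasDerivAt (fun s ↦ p + c * (s - 1 + exp (-s))) (c * (1 - exp (-t))) t :=
  ((((hasDerivAt_id t).sub_const 1).add (hasDerivAt_neg t).exp).const_mul c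
    |>.const_add p).congr_deriv (by ring)

theorem eqOn_rampResponse_of_hasDerivAt {p c τ : ℝ} {q : ℝ → ℝ}
    (hq : ∀ t ∈ Icc 0 τ, HasDerivAt q (p + c * t - q t) t) (hq0 : q 0 = p) :
    EqOn q (fun t ↦ p + c * (t - 1 + exp (-t))) (Icc 0 τ) := by
  refine eqOn_Icc_of_hasDerivAt_sub_self hq (fun t _ ↦ ?_) (by simp [hq0])
  exact (hasDerivAt_rampResponse p c t).congr_deriv (by ring)

theorem sub_one_add_exp_neg_nonneg (τ : ℝ) : 0 ≤ τ - 1 + exp (-τ) := by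
  linarith [add_one_le_exp (-τ)]

theorem stmt_6_general (τ pa pa' : ℝ) (hle : pa' ≤ pa)
    (f : ℝ → ℝ) (hf : ∀ t, f t = pa + (t / (τ - 1 + Real.exp (-τ))) * (pa' - pa))
    (q : ℝ → ℝ)
    (hq : ∀ t ∈ Set.Icc (0:ℝ) τ, HasDerivAt q (f t - q t) t)
    (hq0 : q 0 = pa) :
    ∀ t ∈ Set.Icc (0:ℝ) τ,
      HasDerivAt q (((1 - Real.exp (-t)) / (τ - 1 + Real.exp (-τ))) * (pa' - pa)) t ∧
      ((1 - Real.exp (-t)) / (τ - 1 + Real.exp (-τ))) * (pa' - pa) ≤ 0 := by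
  set D := τ - 1 + exp (-τ)
  have hsol : EqOn q (fun t ↦ pa + (pa' - pa) / D * (t - 1 + exp (-t))) (Icc 0 τ) :=
    eqOn_rampResponse_of_hasDerivAt
      (fun t ht ↦ (hq t ht).congr_deriv (by rw [hf]; ring)) hq0
  intro t ht
  have hrate : f t - q t = (1 - exp (-t)) / D * (pa' - pa) := by
    rw [hf, hsol ht]
    ring
  refine ⟨hrate ▸ hq t ht, mul_nonpos_of_nonneg_of_nonpos ?_ (by linarith)⟩
  exact div_nonneg (by linarith [exp_le_one_iff.mpr (neg_nonpos.mpr ht.1)])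
    (sub_one_add_exp_neg_nonneg τ)

theorem stmt_6 (τ pa pa' : ℝ) (hτ : 0 < τ) (hpa' : 0 < pa') (hle : pa' ≤ pa)
    (f : ℝ → ℝ) (hf : ∀ t, f t = pa + (t / (τ - 1 + Real.exp (-τ))) * (pa' - pa))
    (q : ℝ → ℝ)
    (hq : ∀ t ∈ Set.Icc (0:ℝ) τ, HasDerivAt q (f t - q t) t)
    (hq0 : q 0 = pa) :
    ∀ t ∈ Set.Icc (0:ℝ) τ,
      HasDerivAt q (((1 - Real.exp (-t)) / (τ - 1 + Real.exp (-τ))) * (pa' - pa)) t ∧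
      ((1 - Real.exp (-t)) / (τ - 1 + Real.exp (-τ))) * (pa' - pa) ≤ 0 :=
  stmt_6_general τ pa pa' hle f hf q hq hq0
end

section
/- Let g : {1,…,n} × {1,…,n} → ℝ be symmetric nonnegative edge weights on the complete graph on n ≥ 2 vertices, define the capacity of a path x_1 → ⋯ → x_m as c(x) = min_k g(x_k, x_{k+1}), and define the maximum capacity C = min_{i ≠ j} max over paths from i to j of c(x). If T is a spanning tree that maximizes the minimum edge weight among all spanning trees, then for every pair i ≠ j, the unique path in T from i to j has capacity at least C; consequently C = min over edges (i,j) of T of g(i,j). -/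
/-- The capacity of a path `x 0 → x 1 → ⋯ → x m` (with `m ≥ 1` steps) under edge
weights `g`: the minimum edge weight along the path. -/
noncomputable def pathCapacity {n : ℕ} (g : Fin n → Fin n → ℝ) (m : ℕ)
    (x : ℕ → Fin n) : ℝ :=
  sInf {y : ℝ | ∃ k < m, y = g (x k) (x (k + 1))}

/-- The maximum (bottleneck) capacity of the weighted complete graph on `Fin n`:
the worst case over pairs `i ≠ j` of the best achievable path capacity from `i` to `j`. -/
noncomputable def maxCapacity {n : ℕ} (g : Fin n → Fin n → ℝ) : ℝ :=
  sInf {y : ℝ | ∃ i j : Fin n, i ≠ j ∧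
    y = sSup {c : ℝ | ∃ m : ℕ, 1 ≤ m ∧ ∃ x : ℕ → Fin n,
      x 0 = i ∧ x m = j ∧ c = pathCapacity g m x}}

/-- The minimum edge weight of a graph `T` under edge weights `g`. -/
noncomputable def minEdgeWeight {n : ℕ} (g : Fin n → Fin n → ℝ)
    (T : SimpleGraph (Fin n)) : ℝ :=
  sInf {y : ℝ | ∃ i j : Fin n, T.Adj i j ∧ y = g i j}

/-! Let `C = maxCapacity g`. Since only finitely many capacities occur, every pair `i ≠ j` is
joined by a path of capacity at least `C`. Hence the edges of weight at least `C` form a connected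
graph: a path of capacity at least `C` leaving one of its components would leave it along such an
edge. A spanning tree of this graph has minimum edge weight at least `C`, hence so does the optimal
tree `T`. Conversely, the paths inside the connected graph `T` have capacity at least its minimum
edge weight, so `C ≥ minEdgeWeight g T`. -/

open SimpleGraph

lemma exists_lt_mem_notMem_succ {α : Type*} {A : Set α} {x : ℕ → α} {m : ℕ}
    (h0 : x 0 ∈ A) (hm : x m ∉ A) : ∃ k < m, x k ∈ A ∧ x (k + 1) ∉ A := by
  induction m with
  | zero => exact absurd h0 hm
  | succ m ih =>
    by_cases hxm : x m ∈ A
    · exact ⟨m, m.lt_succ_self, hxm, hm⟩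
    · obtain ⟨k, hk, hxk⟩ := ih hxm
      exact ⟨k, hk.trans m.lt_succ_self, hxk⟩

section

variable {n : ℕ} (g : Fin n → Fin n → ℝ)

def pathCapacities (i j : Fin n) : Set ℝ :=
  {c : ℝ | ∃ m : ℕ, 1 ≤ m ∧ ∃ x : ℕ → Fin n, x 0 = i ∧ x m = j ∧ c = pathCapacity g m x}

lemma pathCapacity_le {m : ℕ} (x : ℕ → Fin n) {k : ℕ} (hk : k < m) :
    pathCapacity g m x ≤ g (x k) (x (k + 1)) :=
  csInf_le ((Set.finite_range (Function.uncurry g)).bddBelow.mono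
    (by rintro _ ⟨l, -, rfl⟩; exact ⟨(_, _), rfl⟩)) ⟨k, hk, rfl⟩

lemma le_pathCapacity {m : ℕ} (hm : 1 ≤ m) {x : ℕ → Fin n} {c : ℝ}
    (h : ∀ k < m, c ≤ g (x k) (x (k + 1))) : c ≤ pathCapacity g m x :=
  le_csInf ⟨_, 0, hm, rfl⟩ (by rintro _ ⟨k, hk, rfl⟩; exact h k hk)

lemma pathCapacity_mem_range {m : ℕ} (hm : 1 ≤ m) (x : ℕ → Fin n) :
    pathCapacity g m x ∈ Set.range (Function.uncurry g) := by
  have hsub : {y : ℝ | ∃ k < m, y = g (x k) (x (k + 1))} ⊆ Set.range (Function.uncurry g) := by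
    rintro _ ⟨k, -, rfl⟩
    exact ⟨(_, _), rfl⟩
  exact hsub (Set.Nonempty.csInf_mem ⟨_, 0, hm, rfl⟩ ((Set.finite_range _).subset hsub))

lemma pathCapacities_finite (i j : Fin n) : (pathCapacities g i j).Finite :=
  (Set.finite_range (Function.uncurry g)).subset
    (by rintro _ ⟨m, hm, x, -, -, rfl⟩; exact pathCapacity_mem_range g hm x)

lemma pathCapacities_nonempty (i j : Fin n) : (pathCapacities g i j).Nonempty :=
  ⟨_, 1, le_rfl, fun k => if k = 0 then i else j, rfl, rfl, rfl⟩

lemma exists_path_maxCapacity_le {i j : Fin n} (hij : i ≠ j) :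
    ∃ m : ℕ, 1 ≤ m ∧ ∃ x : ℕ → Fin n, x 0 = i ∧ x m = j ∧
      maxCapacity g ≤ pathCapacity g m x := by
  have hbdd : BddBelow {y : ℝ | ∃ i j : Fin n, i ≠ j ∧ y = sSup (pathCapacities g i j)} :=
    (Set.finite_range fun p : Fin n × Fin n => sSup (pathCapacities g p.1 p.2)).bddBelow.mono
      (by rintro _ ⟨i, j, -, rfl⟩; exact ⟨(i, j), rfl⟩)
  obtain ⟨m, hm, x, hx0, hxm, hcap⟩ :=
    (pathCapacities_nonempty g i j).csSup_mem (pathCapacities_finite g i j)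
  exact ⟨m, hm, x, hx0, hxm, hcap ▸ csInf_le hbdd ⟨i, j, hij, rfl⟩⟩

lemma le_maxCapacity [Nontrivial (Fin n)] {c : ℝ}
    (h : ∀ i j : Fin n, i ≠ j → ∃ m : ℕ, 1 ≤ m ∧ ∃ x : ℕ → Fin n, x 0 = i ∧ x m = j ∧
      c ≤ pathCapacity g m x) :
    c ≤ maxCapacity g := by
  obtain ⟨i, j, hij⟩ := exists_pair_ne (Fin n)
  refine le_csInf ⟨_, i, j, hij, rfl⟩ ?_
  rintro _ ⟨i, j, hij, rfl⟩
  obtain ⟨m, hm, x, hx0, hxm, hc⟩ := h i j hij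
  exact hc.trans (le_csSup (pathCapacities_finite g i j).bddAbove ⟨m, hm, x, hx0, hxm, rfl⟩)

lemma minEdgeWeight_le {T : SimpleGraph (Fin n)} {i j : Fin n} (h : T.Adj i j) :
    minEdgeWeight g T ≤ g i j :=
  csInf_le ((Set.finite_range (Function.uncurry g)).bddBelow.mono
    (by rintro _ ⟨a, b, -, rfl⟩; exact ⟨(a, b), rfl⟩)) ⟨i, j, h, rfl⟩

lemma le_minEdgeWeight [Nontrivial (Fin n)] {T : SimpleGraph (Fin n)} (hT : T.Connected)
    {c : ℝ} (h : ∀ i j, T.Adj i j → c ≤ g i j) : c ≤ minEdgeWeight g T := by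
  obtain ⟨i⟩ := hT.nonempty
  obtain ⟨j, hj⟩ := hT.preconnected.exists_adj_of_nontrivial i
  exact le_csInf ⟨_, i, j, hj, rfl⟩ (by rintro _ ⟨a, b, hab, rfl⟩; exact h a b hab)

lemma minEdgeWeight_le_pathCapacity {T : SimpleGraph (Fin n)} {m : ℕ} (hm : 1 ≤ m)
    {x : ℕ → Fin n} (hx : ∀ k < m, T.Adj (x k) (x (k + 1))) :
    minEdgeWeight g T ≤ pathCapacity g m x :=
  le_pathCapacity g hm fun k hk => minEdgeWeight_le g (hx k hk)

lemma minEdgeWeight_le_maxCapacity [Nontrivial (Fin n)] {T : SimpleGraph (Fin n)}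
    (hT : T.Connected) : minEdgeWeight g T ≤ maxCapacity g := by
  refine le_maxCapacity g fun i j hij => ?_
  obtain ⟨p⟩ := hT.preconnected i j
  have hlen : 1 ≤ p.length := Nat.one_le_iff_ne_zero.2 fun h => hij (p.eq_of_length_eq_zero h)
  exact ⟨p.length, hlen, p.getVert, p.getVert_zero, p.getVert_length,
    minEdgeWeight_le_pathCapacity g hlen fun k hk => p.adj_getVert_succ hk⟩

lemma connected_fromRel_maxCapacity_le [Nontrivial (Fin n)] :
    (fromRel fun u v => maxCapacity g ≤ g u v).Connected := by
  refine ⟨fun i j => ?_⟩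
  by_contra hij
  set A : Set (Fin n) := {v | (fromRel fun u v => maxCapacity g ≤ g u v).Reachable i v}
  obtain ⟨m, -, x, hx0, hxm, hcap⟩ :=
    exists_path_maxCapacity_le g fun h : i = j => hij (h ▸ Reachable.refl i)
  obtain ⟨k, hk, hxk, hxk1⟩ := exists_lt_mem_notMem_succ (A := A) (x := x)
    (by rw [hx0]; exact Reachable.refl i) (by rwa [hxm])
  have hadj : (fromRel fun u v => maxCapacity g ≤ g u v).Adj (x k) (x (k + 1)) :=
    (fromRel_adj _ _ _).2 ⟨fun h => hxk1 (h ▸ hxk), Or.inl (hcap.trans (pathCapacity_le g x hk))⟩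
  exact hxk1 (hxk.trans hadj.reachable)

lemma exists_isTree_maxCapacity_le_minEdgeWeight [Nontrivial (Fin n)]
    (hsym : ∀ i j, g i j = g j i) :
    ∃ T : SimpleGraph (Fin n), T.IsTree ∧ maxCapacity g ≤ minEdgeWeight g T := by
  obtain ⟨T, hle, hT⟩ := (connected_fromRel_maxCapacity_le g).exists_isTree_le
  refine ⟨T, hT, le_minEdgeWeight g hT.connected fun i j hij => ?_⟩
  obtain ⟨-, h | h⟩ := (fromRel_adj _ _ _).1 (hle hij)
  exacts [h, hsym i j ▸ h]

end

theorem stmt_8_general (n : ℕ) (hn : 2 ≤ n) (g : Fin n → Fin n → ℝ)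
    (hsym : ∀ i j, g i j = g j i)
    (T : SimpleGraph (Fin n)) (hT : T.IsTree)
    (hTmax : ∀ T' : SimpleGraph (Fin n), T'.IsTree →
      minEdgeWeight g T' ≤ minEdgeWeight g T) :
    (∀ i j : Fin n, i ≠ j → ∀ (m : ℕ), 1 ≤ m → ∀ x : ℕ → Fin n,
      x 0 = i → x m = j → (∀ k < m, T.Adj (x k) (x (k + 1))) →
      maxCapacity g ≤ pathCapacity g m x) ∧
    maxCapacity g = minEdgeWeight g T := by
  have : Nontrivial (Fin n) := Fin.nontrivial_iff_two_le.2 hn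
  obtain ⟨T', hT', hT'cap⟩ := exists_isTree_maxCapacity_le_minEdgeWeight g hsym
  have heq : maxCapacity g = minEdgeWeight g T :=
    le_antisymm (hT'cap.trans (hTmax T' hT')) (minEdgeWeight_le_maxCapacity g hT.connected)
  exact ⟨fun _ _ _ _ hm _ _ _ hx => heq ▸ minEdgeWeight_le_pathCapacity g hm hx, heq⟩

theorem stmt_8 (n : ℕ) (hn : 2 ≤ n) (g : Fin n → Fin n → ℝ)
    (hsym : ∀ i j, g i j = g j i) (hnonneg : ∀ i j, 0 ≤ g i j)
    (T : SimpleGraph (Fin n)) (hT : T.IsTree)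
    (hTmax : ∀ T' : SimpleGraph (Fin n), T'.IsTree →
      minEdgeWeight g T' ≤ minEdgeWeight g T) :
    (∀ i j : Fin n, i ≠ j → ∀ (m : ℕ), 1 ≤ m → ∀ x : ℕ → Fin n,
      x 0 = i → x m = j → (∀ k < m, T.Adj (x k) (x (k + 1))) →
      maxCapacity g ≤ pathCapacity g m x) ∧
    maxCapacity g = minEdgeWeight g T :=
  stmt_8_general n hn g hsym T hT hTmax
end

section
/- Let E⁰ ∈ ℝⁿ, n ≥ 2, and define edge weights g(i,j) = |E⁰_i - E⁰_j| on the complete graph on n vertices. Define the capacity of a path as the minimum of its edge weights and the maximum capacity C = min_{i≠j} max over paths from i to j of path capacity. Then C = min_i max_j |E⁰_i - E⁰_j|. -/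
noncomputable def pathSet {n : ℕ} (g : Fin n → Fin n → ℝ) (i j : Fin n) : Set ℝ :=
  {c : ℝ | ∃ m : ℕ, 1 ≤ m ∧ ∃ x : ℕ → Fin n, x 0 = i ∧ x m = j ∧ c = pathCapacity g m x}

lemma maxCapacity_eq {n : ℕ} (g : Fin n → Fin n → ℝ) :
    maxCapacity g = sInf {y : ℝ | ∃ i j : Fin n, i ≠ j ∧ y = sSup (pathSet g i j)} := rfl

theorem stmt_11 (n : ℕ) (hn : 2 ≤ n) (E0 : Fin n → ℝ)
    (hne : (Finset.univ : Finset (Fin n)).Nonempty) :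
    maxCapacity (fun i j => |E0 i - E0 j|) =
      Finset.univ.inf' hne (fun i => Finset.univ.sup' hne (fun j => |E0 i - E0 j|)) := by
  classical
  haveI : Nontrivial (Fin n) := Fin.nontrivial_iff_two_le.mpr hn
  set g : Fin n → Fin n → ℝ := fun i j => |E0 i - E0 j| with hg
  have hg0 : ∀ i j, 0 ≤ g i j := fun i j => abs_nonneg _
  set M : Fin n → ℝ := fun i => Finset.univ.sup' hne (fun j => |E0 i - E0 j|) with hM
  set R : ℝ := Finset.univ.inf' hne M with hR
  -- basic pathCapacity lemmas
  have pc_ne : ∀ (m : ℕ) (x : ℕ → Fin n), 1 ≤ m →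
      {y : ℝ | ∃ k < m, y = g (x k) (x (k + 1))}.Nonempty :=
    fun m x hm => ⟨g (x 0) (x 1), 0, hm, rfl⟩
  have pc_bdd : ∀ (m : ℕ) (x : ℕ → Fin n),
      BddBelow {y : ℝ | ∃ k < m, y = g (x k) (x (k + 1))} := by
    intro m x
    exact ⟨0, by rintro y ⟨k, _, rfl⟩; exact hg0 _ _⟩
  have pc_le : ∀ (m : ℕ) (x : ℕ → Fin n) (k : ℕ), k < m →
      pathCapacity g m x ≤ g (x k) (x (k + 1)) :=
    fun m x k hk => csInf_le (pc_bdd m x) ⟨k, hk, rfl⟩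
  have le_pc : ∀ (m : ℕ) (x : ℕ → Fin n), 1 ≤ m →
      (∀ k, k < m → R ≤ g (x k) (x (k + 1))) → R ≤ pathCapacity g m x := by
    intro m x hm h
    exact le_csInf (pc_ne m x hm) (by rintro y ⟨k, hk, rfl⟩; exact h k hk)
  -- path set lemmas
  have PS_ne : ∀ i j : Fin n, (pathSet g i j).Nonempty := by
    intro i j
    refine ⟨pathCapacity g 1 (fun k => if k = 0 then i else j), 1, le_refl 1,
      fun k => if k = 0 then i else j, by simp, by simp, rfl⟩
  have PS_bdd : ∀ i j : Fin n, ∀ c ∈ pathSet g i j, c ≤ M i := by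
    intro i j c hc
    obtain ⟨m, hm, x, hx0, hxm, rfl⟩ := hc
    calc pathCapacity g m x ≤ g (x 0) (x 1) := pc_le m x 0 hm
      _ = |E0 i - E0 (x 1)| := by rw [hx0]
      _ ≤ M i := Finset.le_sup' (fun j => |E0 i - E0 j|) (Finset.mem_univ (x 1))
  -- extremal states
  obtain ⟨p, -, hp⟩ := Finset.exists_max_image Finset.univ E0 hne
  obtain ⟨q, -, hq⟩ := Finset.exists_min_image Finset.univ E0 hne
  have hp' : ∀ k, E0 k ≤ E0 p := fun k => hp k (Finset.mem_univ k)
  have hq' : ∀ k, E0 q ≤ E0 k := fun k => hq k (Finset.mem_univ k)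
  have key : ∀ k : Fin n, R ≤ |E0 k - E0 p| ∨ R ≤ |E0 k - E0 q| := by
    intro k
    have h1 : R ≤ M k := Finset.inf'_le _ (Finset.mem_univ k)
    obtain ⟨j, -, hj⟩ := Finset.exists_mem_eq_sup' hne (fun j => |E0 k - E0 j|)
    have h2 : |E0 k - E0 j| ≤ max |E0 k - E0 p| |E0 k - E0 q| := by
      rcases le_total (E0 k) (E0 j) with h | h
      · have e1 : |E0 k - E0 j| = E0 j - E0 k := by
          rw [abs_sub_comm]; exact abs_of_nonneg (by linarith)
        have e2 : |E0 k - E0 p| = E0 p - E0 k := by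
          rw [abs_sub_comm]; exact abs_of_nonneg (by linarith [hp' k])
        have : |E0 k - E0 j| ≤ |E0 k - E0 p| := by rw [e1, e2]; linarith [hp' j]
        exact this.trans (le_max_left _ _)
      · have : |E0 k - E0 j| ≤ |E0 k - E0 q| := by
          rw [abs_of_nonneg (by linarith), abs_of_nonneg (by linarith [hq' k])]
          linarith [hq' j]
        exact this.trans (le_max_right _ _)
    have h3 : R ≤ max |E0 k - E0 p| |E0 k - E0 q| := by
      refine le_trans ?_ h2
      rw [hM] at h1
      simpa [hj] using h1
    exact le_max_iff.mp h3
  have hpq : R ≤ |E0 p - E0 q| := by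
    rcases key q with h | h
    · rwa [abs_sub_comm] at h
    · have h0 : R ≤ 0 := by simpa using h
      exact h0.trans (abs_nonneg _)
  -- lower bound for each pair
  have lower : ∀ i j : Fin n, R ≤ sSup (pathSet g i j) := by
    intro i j
    have two : ∀ c : Fin n, R ≤ |E0 i - E0 c| → R ≤ |E0 j - E0 c| →
        ∃ y ∈ pathSet g i j, R ≤ y := by
      intro c h1 h2
      refine ⟨pathCapacity g 2 (fun k => if k = 0 then i else if k = 1 then c else j),
        ⟨2, by norm_num, _, by simp, by simp, rfl⟩, ?_⟩
      apply le_pc 2 _ (by norm_num)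
      intro k hk
      interval_cases k
      · simpa [hg] using h1
      · rw [abs_sub_comm] at h2
        simpa [hg] using h2
    have three : ∀ c d : Fin n, R ≤ |E0 i - E0 c| → R ≤ |E0 c - E0 d| →
        R ≤ |E0 j - E0 d| → ∃ y ∈ pathSet g i j, R ≤ y := by
      intro c d h1 h2 h3
      refine ⟨pathCapacity g 3
        (fun k => if k = 0 then i else if k = 1 then c else if k = 2 then d else j),
        ⟨3, by norm_num, _, by simp, by simp, rfl⟩, ?_⟩
      apply le_pc 3 _ (by norm_num)
      intro k hk
      interval_cases k
      · simpa [hg] using h1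
      · simpa [hg] using h2
      · rw [abs_sub_comm] at h3
        simpa [hg] using h3
    obtain ⟨y, hy, hRy⟩ : ∃ y ∈ pathSet g i j, R ≤ y := by
      rcases key i with ha | ha <;> rcases key j with hb | hb
      · exact two p ha hb
      · exact three p q ha hpq hb
      · refine three q p ha ?_ hb
        rwa [abs_sub_comm]
      · exact two q ha hb
    exact hRy.trans (le_csSup ⟨M i, fun c hc => PS_bdd i j c hc⟩ hy)
  -- the collection of pair capacities
  have hT_lb : ∀ y ∈ {y : ℝ | ∃ i j : Fin n, i ≠ j ∧ y = sSup (pathSet g i j)}, R ≤ y := by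
    rintro y ⟨i, j, -, rfl⟩
    exact lower i j
  have hT_ne : {y : ℝ | ∃ i j : Fin n, i ≠ j ∧ y = sSup (pathSet g i j)}.Nonempty := by
    obtain ⟨i, j, hij⟩ := exists_pair_ne (Fin n)
    exact ⟨sSup (pathSet g i j), i, j, hij, rfl⟩
  rw [maxCapacity_eq]
  apply le_antisymm
  · rw [hR]
    apply Finset.le_inf'
    intro i _
    obtain ⟨j, hj⟩ := exists_ne i
    have h1 : sInf {y : ℝ | ∃ i j : Fin n, i ≠ j ∧ y = sSup (pathSet g i j)}
        ≤ sSup (pathSet g i j) := csInf_le ⟨R, hT_lb⟩ ⟨i, j, hj.symm, rfl⟩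
    exact h1.trans (csSup_le (PS_ne i j) (PS_bdd i j))
  · exact le_csInf hT_ne hT_lb
end
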